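/- arXiv:2204.03110 — 4 statements merged into one kernel-verified Lean document; each statement's English description precedes it below -/
import Mathlib

section
/- Let h : ℝ → ℝ be differentiable (the barrier value along a trajectory), ω : ℝ≥0 → ℝ≥0 a strictly increasing continuous function with ω(0) = 0, θ ∈ (0,1), and d > 0. Suppose h(t₀) ≥ 0 and h'(t) > -ω(max(h(t),0)) + θ·d for all t in [t₀, t₁]. Then h(t) ≥ 0 for all t ∈ [t₀, t₁], and moreover h(t₁) > 0 if t₁ > t₀. -/
/-!
At a time where `h` vanishes the trigger condition reads `h' > -ω 0 + θ d = θ d > 0`, so `h` can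
never cross zero from above: it stays nonnegative by the comparison principle, and it cannot
end at zero either, since a positive derivative there would make it negative just before.
-/

open Set Filter Topology

theorem HasDerivAt.eventually_nhdsLT_lt {f : ℝ → ℝ} {f' x : ℝ} (hf : HasDerivAt f f' x)
    (hf' : 0 < f') : ∀ᶠ y in 𝓝[<] x, f y < f x := by
  filter_upwards [(hasDerivAt_iff_tendsto_slope_left_right.mp hf).1.eventually
    (eventually_gt_nhds hf'), self_mem_nhdsWithin] with y hslope hyx
  rwa [slope_comm, slope_pos_iff_of_le hyx.le] at hslope

section DerivPosAtZero

variable {f f' : ℝ → ℝ} {a b : ℝ}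

theorem nonneg_on_Icc_of_deriv_pos_of_eq_zero (hf : ∀ t ∈ Icc a b, HasDerivAt f (f' t) t)
    (ha : 0 ≤ f a) (hzero : ∀ t ∈ Icc a b, f t = 0 → 0 < f' t) :
    ∀ t ∈ Icc a b, 0 ≤ f t := by
  intro t ht
  have hneg : -f t ≤ 0 :=
    image_le_of_deriv_right_lt_deriv_boundary (f' := -f') (B := 0) (B' := 0)
      (fun s hs => (hf s hs).continuousAt.continuousWithinAt.neg)
      (fun s hs => (hf s (Ico_subset_Icc_self hs)).neg.hasDerivWithinAt)
      (by simpa using ha) (fun s => hasDerivAt_const s 0)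
      (fun s hs hs0 => by
        simpa using hzero s (Ico_subset_Icc_self hs) (neg_eq_zero.mp hs0)) ht
  exact neg_nonpos.mp hneg

theorem pos_right_of_deriv_pos_of_eq_zero (hf : ∀ t ∈ Icc a b, HasDerivAt f (f' t) t)
    (ha : 0 ≤ f a) (hzero : ∀ t ∈ Icc a b, f t = 0 → 0 < f' t) (hab : a < b) : 0 < f b := by
  have hnonneg := nonneg_on_Icc_of_deriv_pos_of_eq_zero hf ha hzero
  have hb : b ∈ Icc a b := right_mem_Icc.mpr hab.le
  by_contra! hfb
  have hfb0 : f b = 0 := le_antisymm hfb (hnonneg b hb)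
  obtain ⟨y, hfy, hy⟩ :=
    ((hf b hb).eventually_nhdsLT_lt (hzero b hb hfb0)).and (Ioo_mem_nhdsLT hab) |>.exists
  linarith [hnonneg y (Ioo_subset_Icc_self hy)]

end DerivPosAtZero

theorem stmt_2_general (h : ℝ → ℝ) (ω : ℝ → ℝ) (θ d t₀ t₁ : ℝ)
    (hh : Differentiable ℝ h)
    (hω0 : ω 0 = 0)
    (hθ : θ ∈ Set.Ioo (0 : ℝ) 1) (hd : 0 < d)
    (h0 : 0 ≤ h t₀)
    (hderiv : ∀ t ∈ Set.Icc t₀ t₁, deriv h t > -ω (max (h t) 0) + θ * d) :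
    (∀ t ∈ Set.Icc t₀ t₁, 0 ≤ h t) ∧ (t₀ < t₁ → 0 < h t₁) := by
  have hderiv_at : ∀ t ∈ Icc t₀ t₁, HasDerivAt h (deriv h t) t := fun t _ => (hh t).hasDerivAt
  have hzero : ∀ t ∈ Icc t₀ t₁, h t = 0 → 0 < deriv h t := by
    intro t ht hht
    have := hderiv t ht
    rw [hht, max_self, hω0] at this
    linarith [mul_pos hθ.1 hd]
  exact ⟨nonneg_on_Icc_of_deriv_pos_of_eq_zero hderiv_at h0 hzero,
    pos_right_of_deriv_pos_of_eq_zero hderiv_at h0 hzero⟩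

/-- Safety during the "controller on" phase (Theorem 2): if `h t₀ ≥ 0` and
`h' t > -ω(max (h t) 0) + θ d` on `[t₀, t₁]`, with `ω` class-K, `θ ∈ (0,1)`, `d > 0`,
then `h` stays nonnegative and ends strictly positive if `t₁ > t₀`. -/
theorem stmt_2 (h : ℝ → ℝ) (ω : ℝ → ℝ) (θ d t₀ t₁ : ℝ)
    (hh : Differentiable ℝ h)
    (hω_cont : ContinuousOn ω (Set.Ici 0))
    (hω_mono : StrictMonoOn ω (Set.Ici 0))
    (hω0 : ω 0 = 0)
    (hω_nonneg : ∀ s, 0 ≤ s → 0 ≤ ω s)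
    (hθ : θ ∈ Set.Ioo (0 : ℝ) 1) (hd : 0 < d)
    (h0 : 0 ≤ h t₀)
    (hderiv : ∀ t ∈ Set.Icc t₀ t₁, deriv h t > -ω (max (h t) 0) + θ * d) :
    (∀ t ∈ Set.Icc t₀ t₁, 0 ≤ h t) ∧ (t₀ < t₁ → 0 < h t₁) :=
  stmt_2_general h ω θ d t₀ t₁ hh hω0 hθ hd h0 hderiv
end

section
/- Let h : ℝ → ℝ be differentiable, ω : ℝ≥0 → ℝ≥0 continuous, strictly increasing, with ω(0) = 0, and c > 0. If h(t₀) > 0 and h'(t) > -c·ω(max(h(t),0)) for all t ∈ [t₀, t₁], then h(t) > 0 for all t ∈ [t₀, t₁]. -/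
/-- Forward invariance during the "controller off" phase (Theorem 2, trigger (12)):
if `h t₀ > 0` and `h' t > -c ω(max (h t) 0)` on `[t₀, t₁]`, with `ω` class-K and `c > 0`,
then `h` stays strictly positive on `[t₀, t₁]`. -/
theorem stmt_3 (h : ℝ → ℝ) (ω : ℝ → ℝ) (c t₀ t₁ : ℝ) (hc : 0 < c)
    (hh : Differentiable ℝ h)
    (hω_cont : ContinuousOn ω (Set.Ici 0))
    (hω_mono : StrictMonoOn ω (Set.Ici 0))
    (hω0 : ω 0 = 0)
    (h0 : 0 < h t₀)
    (hderiv : ∀ t ∈ Set.Icc t₀ t₁, deriv h t > -c * ω (max (h t) 0)) :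
    ∀ t ∈ Set.Icc t₀ t₁, 0 < h t := by
  by_contra hcon
  push_neg at hcon
  obtain ⟨u, hu, hu0⟩ := hcon
  -- the set of times in [t₀,t₁] where h ≤ 0
  set S : Set ℝ := {t | t ∈ Set.Icc t₀ t₁ ∧ h t ≤ 0} with hS
  have hSne : S.Nonempty := ⟨u, hu, hu0⟩
  have hSbdd : BddBelow S := ⟨t₀, fun x hx => hx.1.1⟩
  have hSclosed : IsClosed S := by
    have : S = Set.Icc t₀ t₁ ∩ h ⁻¹' Set.Iic 0 := by
      ext x; simp [hS, Set.mem_Icc, and_assoc]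
    rw [this]
    exact isClosed_Icc.inter (isClosed_Iic.preimage hh.continuous)
  set s := sInf S with hs
  have hsS : s ∈ S := hSclosed.csInf_mem hSne hSbdd
  have hst₀ : t₀ ≤ s := hsS.1.1
  have hst₁ : s ≤ t₁ := hsS.1.2
  have hs_ne : s ≠ t₀ := by
    intro he; rw [he] at hsS; exact absurd hsS.2 (not_le.2 h0)
  have ht₀s : t₀ < s := lt_of_le_of_ne hst₀ (Ne.symm hs_ne)
  -- before s, h > 0
  have hpos : ∀ t, t₀ ≤ t → t < s → 0 < h t := by
    intro t h1 h2
    by_contra hle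
    push_neg at hle
    have : t ∈ S := ⟨⟨h1, le_trans h2.le hst₁⟩, hle⟩
    exact absurd (csInf_le hSbdd this) (not_le.2 h2)
  -- h s ≥ 0 by continuity from the left
  have hhs0 : h s = 0 := by
    have hge : 0 ≤ h s := by
      have htend : Filter.Tendsto h (nhdsWithin s (Set.Iio s)) (nhds (h s)) :=
        (hh.continuous.tendsto s).mono_left nhdsWithin_le_nhds
      refine ge_of_tendsto htend ?_
      filter_upwards [Ioo_mem_nhdsLT_of_mem ⟨ht₀s, le_refl s⟩] with t ht
      exact (hpos t ht.1.le ht.2).le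
    exact le_antisymm hsS.2 hge
  -- derivative at s is positive from trigger
  have hd : 0 < deriv h s := by
    have := hderiv s ⟨hst₀, hst₁⟩
    rw [hhs0] at this
    simpa [hω0] using this
  -- but the left slope is nonpositive
  have hslope : Filter.Tendsto (slope h s) (nhdsWithin s (Set.Iio s)) (nhds (deriv h s)) := by
    have := hasDerivAt_iff_tendsto_slope.1 (hh s).hasDerivAt
    exact this.mono_left (nhdsWithin_mono s (fun x hx => ne_of_lt hx))
  have hdle : deriv h s ≤ 0 := by
    refine le_of_tendsto hslope ?_
    filter_upwards [Ioo_mem_nhdsLT_of_mem ⟨ht₀s, le_refl s⟩] with t ht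
    have hslope_eq : slope h s t = h t / (t - s) := by
      simp [slope, hhs0, div_eq_inv_mul]
    rw [hslope_eq]
    exact le_of_lt (div_neg_of_pos_of_neg (hpos t ht.1.le ht.2) (by linarith [ht.2]))
  linarith
end

section
/- Let f : ℝ → ℝ be differentiable with f(t₀) ≥ 0 and suppose there exist δ > 0 and m > 0 such that f'(t) ≥ m whenever f(t) < δ, for all t ∈ [t₀, t₁]. Then f(t) ≥ 0 on [t₀, t₁], and if t₁ - t₀ ≥ δ/m then f(t₁) ≥ δ. -/
open Set

/-- Past the last time `u` at which `c ≤ g u`, the function stays below `c`, so it is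
nondecreasing there and ends above `g u ≥ c`. -/
theorem le_right_of_le_left_of_deriv_nonneg_below {g : ℝ → ℝ} {a b c : ℝ} (hab : a ≤ b)
    (hcont : ContinuousOn g (Icc a b)) (hdiff : DifferentiableOn ℝ g (Ioo a b))
    (ha : c ≤ g a) (hd : ∀ t ∈ Ioo a b, g t < c → 0 ≤ deriv g t) : c ≤ g b := by
  set S := {t ∈ Icc a b | c ≤ g t}
  have hS : IsCompact S :=
    isCompact_Icc.of_isClosed_subset (isClosed_Icc.isClosed_le continuousOn_const hcont)
      (sep_subset _ _)
  obtain ⟨u, ⟨⟨hau, hub⟩, hcu⟩, hmax⟩ := hS.exists_isGreatest ⟨a, ⟨le_rfl, hab⟩, ha⟩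
  have hsub : Ioo u b ⊆ Ioo a b := Ioo_subset_Ioo_left hau
  have hbelow : ∀ t ∈ Ioo u b, g t < c := fun t ht => by
    by_contra! hct
    exact (hmax ⟨Ioo_subset_Icc_self (hsub ht), hct⟩).not_gt ht.1
  have hmono : MonotoneOn g (Icc u b) := by
    refine monotoneOn_of_deriv_nonneg (convex_Icc u b)
      (hcont.mono (Icc_subset_Icc_left hau)) ?_ ?_ <;> rw [interior_Icc]
    · exact hdiff.mono hsub
    · exact fun t ht => hd t (hsub ht) (hbelow t ht)
  exact hcu.trans (hmono ⟨le_rfl, hub⟩ ⟨hub, le_rfl⟩ hub)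

/-- Abstract barrier argument of Theorem 2: if `f t₀ ≥ 0` and `f' t ≥ m > 0` whenever
`f t < δ` on `[t₀, t₁]`, then `f ≥ 0` on `[t₀, t₁]`, and `f t₁ ≥ δ` provided
`t₁ - t₀ ≥ δ / m`. -/
theorem stmt_11 (f : ℝ → ℝ) (t₀ t₁ δ m : ℝ)
    (hf : Differentiable ℝ f)
    (hδ : 0 < δ) (hm : 0 < m) (ht : t₀ ≤ t₁)
    (h0 : 0 ≤ f t₀)
    (hderiv : ∀ t ∈ Set.Icc t₀ t₁, f t < δ → m ≤ deriv f t) :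
    (∀ t ∈ Set.Icc t₀ t₁, 0 ≤ f t) ∧ (δ / m ≤ t₁ - t₀ → δ ≤ f t₁) := by
  have hderiv_nonneg : ∀ t ∈ Icc t₀ t₁, f t < δ → 0 ≤ deriv f t :=
    fun t ht hft => hm.le.trans (hderiv t ht hft)
  refine ⟨fun t ht => ?_, fun hlen => ?_⟩
  · refine le_right_of_le_left_of_deriv_nonneg_below ht.1 hf.continuous.continuousOn
      hf.differentiableOn h0 fun s hs hfs => ?_
    exact hderiv_nonneg s ⟨hs.1.le, hs.2.le.trans ht.2⟩ (hfs.trans hδ)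
  by_contra! hlt
  -- once `f` reached `δ` it could not drop below it again before `t₁`
  have hbelow : ∀ s ∈ Icc t₀ t₁, f s < δ := fun s hs => by
    by_contra! hfs
    refine hlt.not_ge (le_right_of_le_left_of_deriv_nonneg_below hs.2
      hf.continuous.continuousOn hf.differentiableOn hfs fun r hr hfr => ?_)
    exact hderiv_nonneg r ⟨hs.1.trans hr.1.le, hr.2.le⟩ hfr
  have hgrowth : m * (t₁ - t₀) ≤ f t₁ - f t₀ := by
    refine (convex_Icc t₀ t₁).mul_sub_le_image_sub_of_le_deriv hf.continuous.continuousOn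
      hf.differentiableOn (fun t ht => ?_) t₀ ⟨le_rfl, ht⟩ t₁ ⟨ht, le_rfl⟩ ht
    exact hderiv t (interior_subset ht) (hbelow t (interior_subset ht))
  have hδle : δ ≤ m * (t₁ - t₀) := by
    rw [mul_comm]; exact (div_le_iff₀ hm).mp hlen
  linarith
end

section
/- Suppose V, S : [t₀, ∞) → ℝ are continuous, with V(t) ≤ S(t) for all t, and on each interval [tᵢ^off, tᵢ₊₁^on) the specification satisfies S' = -λ·S with λ > 0 and S(tᵢ^off) = (V(tᵢ^on) + V(tᵢ^off))/2, while on [tᵢ^on, tᵢ^off) V is nonincreasing with V(tᵢ^off) ≤ V(tᵢ^on). If V ≥ 0, the interval lengths tᵢ^off − tᵢ^off are uniformly bounded below by τ > 0, and S is continuous and nonincreasing across switching times, then S(t) → 0 and hence V(t) → 0 as t → ∞. -/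
/-!
On every off-interval `S` solves `S' = -λ S`, so across it `S` is multiplied by
`exp (-λ (tᵢ₊₁^on - tᵢ^off)) ≤ exp (-λ τ) < 1`; since `S` is nonincreasing on the on-intervals,
the values `S (tᵢ^off)` decay geometrically. Monotonicity of `S ≥ 0` then gives `S → 0`, and
`0 ≤ V ≤ S` squeezes `V → 0`.
-/

open Set Filter Topology

theorem eq_mul_exp_of_hasDerivAt_neg_mul {f : ℝ → ℝ} {lam a b : ℝ}
    (hcont : ContinuousOn f (Icc a b))
    (hderiv : ∀ t ∈ Ico a b, HasDerivAt f (-lam * f t) t) :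
    ∀ t ∈ Icc a b, f t = f a * Real.exp (-lam * (t - a)) := by
  have hexp (t : ℝ) : HasDerivAt (fun t => Real.exp (lam * t)) (Real.exp (lam * t) * lam) t := by
    simpa using ((hasDerivAt_id t).const_mul lam).exp
  have hconst : ∀ t ∈ Icc a b, f t * Real.exp (lam * t) = f a * Real.exp (lam * a) := by
    refine constant_of_has_deriv_right_zero
      (hcont.mul (by fun_prop)) fun t ht => ?_
    have h := (hderiv t ht).mul (hexp t)
    rw [show -lam * f t * Real.exp (lam * t) + f t * (Real.exp (lam * t) * lam) = 0 by ring] at h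
    exact h.hasDerivWithinAt
  intro t ht
  have h := hconst t ht
  rw [show -lam * (t - a) = lam * a - lam * t by ring, Real.exp_sub]
  field_simp
  linarith

theorem tendsto_zero_of_antitoneOn_of_tendsto_comp {S : ℝ → ℝ} {t₀ : ℝ} {x : ℕ → ℝ}
    (hS : AntitoneOn S (Ici t₀)) (hnonneg : ∀ t, t₀ ≤ t → 0 ≤ S t) (hx : ∀ n, t₀ ≤ x n)
    (hlim : Tendsto (S ∘ x) atTop (𝓝 0)) :
    Tendsto S atTop (𝓝 0) := by
  refine tendsto_order.2 ⟨fun a ha => ?_, fun a ha => ?_⟩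
  · filter_upwards [eventually_ge_atTop t₀] with t ht
    exact ha.trans_le (hnonneg t ht)
  · obtain ⟨N, hN⟩ := (hlim.eventually (gt_mem_nhds ha)).exists
    filter_upwards [eventually_ge_atTop (x N)] with t ht
    exact (hS (hx N) ((hx N).trans ht) ht).trans_lt hN

theorem stmt_15_general (V S : ℝ → ℝ) (ton toff : ℕ → ℝ) (lam τ : ℝ)
    (hlam : 0 < lam) (hτ : 0 < τ)
    (horder : ∀ i, ton i < toff i ∧ toff i < ton (i + 1))
    (hScont : ContinuousOn S (Set.Ici (ton 0)))
    (hVS : ∀ t, ton 0 ≤ t → V t ≤ S t)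
    (hVpos : ∀ t, 0 ≤ V t)
    (hSdecay : ∀ i, ∀ t ∈ Set.Ico (toff i) (ton (i + 1)), HasDerivAt S (-lam * S t) t)
    (hdwell : ∀ i, τ ≤ ton (i + 1) - toff i)
    (hSmono : AntitoneOn S (Set.Ici (ton 0))) :
    Filter.Tendsto S Filter.atTop (nhds 0) ∧
      Filter.Tendsto V Filter.atTop (nhds 0) := by
  have hton : ∀ n, ton 0 ≤ ton n := fun n =>
    monotone_nat_of_le_succ (fun k => ((horder k).1.trans (horder k).2).le) (Nat.zero_le n)
  have htoff : ∀ n, ton 0 ≤ toff n := fun n => (hton n).trans (horder n).1.le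
  have hSnonneg : ∀ t, ton 0 ≤ t → 0 ≤ S t := fun t ht => (hVpos t).trans (hVS t ht)
  set q := Real.exp (-lam * τ)
  have hq : q < 1 := Real.exp_lt_one_iff.2 (by nlinarith)
  have hstep : ∀ n, S (toff (n + 1)) ≤ q * S (toff n) := by
    intro n
    have hoff := (horder n).2.le
    have hsol := eq_mul_exp_of_hasDerivAt_neg_mul
      (hScont.mono fun t ht => (htoff n).trans ht.1) (hSdecay n) _ ⟨hoff, le_rfl⟩
    calc S (toff (n + 1)) ≤ S (ton (n + 1)) :=
          hSmono (hton _) (htoff _) (horder (n + 1)).1.le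
      _ = S (toff n) * Real.exp (-lam * (ton (n + 1) - toff n)) := hsol
      _ ≤ S (toff n) * q :=
          mul_le_mul_of_nonneg_left (Real.exp_le_exp.2 (by nlinarith [hdwell n]))
            (hSnonneg _ (htoff n))
      _ = q * S (toff n) := mul_comm _ _
  have hgeom : Tendsto (fun n => q ^ n * S (toff 0)) atTop (𝓝 0) := by
    simpa only [zero_mul] using (tendsto_pow_atTop_nhds_zero_of_lt_one (Real.exp_pos _).le hq).mul_const
      (S (toff 0))
  have hSoff : Tendsto (S ∘ toff) atTop (𝓝 0) :=
    squeeze_zero (fun n => hSnonneg _ (htoff n))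
      (fun n => le_geom (Real.exp_pos _).le n fun k _ => hstep k) hgeom
  have hSlim := tendsto_zero_of_antitoneOn_of_tendsto_comp hSmono hSnonneg htoff hSoff
  refine ⟨hSlim, tendsto_of_tendsto_of_tendsto_of_le_of_le' tendsto_const_nhds hSlim
    (Eventually.of_forall hVpos) ?_⟩
  filter_upwards [eventually_ge_atTop (ton 0)] with t ht
  exact hVS t ht

/-- Concrete performance specification after Corollary 1: `S` decays exponentially
(`S' = -λ S`) on the off-intervals `[tᵢ^off, tᵢ₊₁^on)`, is reset to
`(V(tᵢ^on) + V(tᵢ^off))/2` at each `tᵢ^off`, `V` is nonincreasing on the on-intervals,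
`0 ≤ V ≤ S`, the off-interval lengths are uniformly bounded below by `τ > 0`, and `S` is
continuous and nonincreasing across switching times.  Then `S → 0` and hence `V → 0`. -/
theorem stmt_15 (V S : ℝ → ℝ) (ton toff : ℕ → ℝ) (lam τ : ℝ)
    (hlam : 0 < lam) (hτ : 0 < τ)
    (horder : ∀ i, ton i < toff i ∧ toff i < ton (i + 1))
    (hVcont : ContinuousOn V (Set.Ici (ton 0)))
    (hScont : ContinuousOn S (Set.Ici (ton 0)))
    (hVS : ∀ t, ton 0 ≤ t → V t ≤ S t)
    (hVpos : ∀ t, 0 ≤ V t)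
    (hSdecay : ∀ i, ∀ t ∈ Set.Ico (toff i) (ton (i + 1)), HasDerivAt S (-lam * S t) t)
    (hSreset : ∀ i, S (toff i) = (V (ton i) + V (toff i)) / 2)
    (hVmono : ∀ i, AntitoneOn V (Set.Icc (ton i) (toff i)))
    (hVdec : ∀ i, V (toff i) ≤ V (ton i))
    (hdwell : ∀ i, τ ≤ ton (i + 1) - toff i)
    (hSmono : AntitoneOn S (Set.Ici (ton 0))) :
    Filter.Tendsto S Filter.atTop (nhds 0) ∧
      Filter.Tendsto V Filter.atTop (nhds 0) :=
  stmt_15_general V S ton toff lam τ hlam hτ horder hScont hVS hVpos hSdecay hdwell hSmono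
end
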